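/- Fix an integer n ≥ 4. Let λ : Fin n → ℝ, set t = (∑ i, λ i) / (n − 1), and let h : Fin n → Fin n → Fin n → ℝ be totally symmetric: h i j k = h j i k = h i k j for all i, j, k. Assume the semiparallelity equations: for all a, b, c, d, e in Fin n, (λ a + λ b − t) * (h c d b * δ a e − h c d a * δ b e − δ d b * h c a e + δ d a * h c b e − δ c b * h d a e + δ c a * h d b e) = 0, where δ i j = 1 if i = j and δ i j = 0 otherwise. If i, k in Fin n satisfy i ≠ k and λ i + λ k ≠ t, then h i i k = 0 and 2 * (h i k k) = h i i i. -/

import Mathlib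

/-- Kronecker delta on `Fin n`, valued in `ℝ`. -/
def kdelta {n : ℕ} (i j : Fin n) : ℝ := if i = j then 1 else 0

theorem kdelta_self {n : ℕ} (i : Fin n) : kdelta i i = 1 := if_pos rfl

theorem kdelta_of_ne {n : ℕ} {i j : Fin n} (hij : i ≠ j) : kdelta i j = 0 := if_neg hij

/-- The components of `2 A_{J e_i} e_k + g(A_{J e_i} e_i, e_k) e_i - g(A_{J e_i} e_i, e_i) e_k = 0`,
equation (3.2) of the paper. -/
theorem two_mul_add_sub_eq_zero_of_semiparallel {n : ℕ} {lam : Fin n → ℝ} {t : ℝ}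
    {h : Fin n → Fin n → Fin n → ℝ}
    (hsp : ∀ a b c d e : Fin n,
      (lam a + lam b - t) *
        (h c d b * kdelta a e - h c d a * kdelta b e
          - kdelta d b * h c a e + kdelta d a * h c b e
          - kdelta c b * h d a e + kdelta c a * h d b e) = 0)
    {i k : Fin n} (hik : i ≠ k) (hlik : lam i + lam k ≠ t) (e : Fin n) :
    2 * h i k e + h i i k * kdelta i e - h i i i * kdelta k e = 0 := by
  have hbracket := (mul_eq_zero.mp (hsp i k i i e)).resolve_left (sub_ne_zero.mpr hlik)
  rw [kdelta_self, kdelta_of_ne hik] at hbracket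
  linarith

theorem stmt7_general (n : ℕ) (lam : Fin n → ℝ)
    (t : ℝ)
    (h : Fin n → Fin n → Fin n → ℝ)
    (hsym : ∀ i j k : Fin n, h i j k = h j i k ∧ h i j k = h i k j)
    (hsp : ∀ a b c d e : Fin n,
      (lam a + lam b - t) *
        (h c d b * kdelta a e - h c d a * kdelta b e
          - kdelta d b * h c a e + kdelta d a * h c b e
          - kdelta c b * h d a e + kdelta c a * h d b e) = 0)
    (i k : Fin n) (hik : i ≠ k) (hlik : lam i + lam k ≠ t) :
    h i i k = 0 ∧ 2 * h i k k = h i i i := by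
  have at_i := two_mul_add_sub_eq_zero_of_semiparallel hsp hik hlik i
  have at_k := two_mul_add_sub_eq_zero_of_semiparallel hsp hik hlik k
  rw [kdelta_self, kdelta_of_ne hik.symm] at at_i
  rw [kdelta_self, kdelta_of_ne hik] at at_k
  have hki : h i k i = h i i k := (hsym i k i).2
  constructor <;> linarith

theorem stmt7 (n : ℕ) (hn : 4 ≤ n) (lam : Fin n → ℝ)
    (t : ℝ) (ht : t = (∑ i, lam i) / ((n : ℝ) - 1))
    (h : Fin n → Fin n → Fin n → ℝ)
    (hsym : ∀ i j k : Fin n, h i j k = h j i k ∧ h i j k = h i k j)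
    (hsp : ∀ a b c d e : Fin n,
      (lam a + lam b - t) *
        (h c d b * kdelta a e - h c d a * kdelta b e
          - kdelta d b * h c a e + kdelta d a * h c b e
          - kdelta c b * h d a e + kdelta c a * h d b e) = 0)
    (i k : Fin n) (hik : i ≠ k) (hlik : lam i + lam k ≠ t) :
    h i i k = 0 ∧ 2 * h i k k = h i i i :=
  stmt7_general n lam t h hsym hsp i k hik hlik
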